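/- arXiv:math/0206026 — 4 statements merged into one kernel-verified Lean document; each statement's English description precedes it below -/
import Mathlib

section
/- Let K be a b-complete idempotent semiring, X a set, and W a b-complete functional semimodule on X (a subset of K(X)). Then W is a b-subsemimodule of K(X) if and only if for every x ∈ X the evaluation functional δ_x : f ↦ f(x) is b-linear on W. -/
/-
Common definitions: b-complete idempotent semirings, b-complete idempotent
semimodules, functional semimodules, b-linear / integral / one-dimensional /
b-nuclear maps, δ-functionals, kernel theorems.
-/

open Set

universe u v w

section Defs

variable {K : Type*} [IdemSemiring K] {X Y : Type*}

/-- `K` is a b-complete idempotent semiring: every nonempty bounded-above subset of `K`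
has a least upper bound, and multiplication on either side distributes over suprema of
nonempty bounded-above subsets. -/
structure IsBCompleteSemiring (K : Type*) [IdemSemiring K] : Prop where
  exists_lub : ∀ s : Set K, s.Nonempty → BddAbove s → ∃ a, IsLUB s a
  mul_left_lub : ∀ (c : K) (s : Set K) (a : K), s.Nonempty → IsLUB s a →
    IsLUB ((fun x => c * x) '' s) (c * a)
  mul_right_lub : ∀ (c : K) (s : Set K) (a : K), s.Nonempty → IsLUB s a →
    IsLUB ((fun x => x * c) '' s) (a * c)

/-- `a` is the supremum of `S` computed *inside* the subset `V` of an ordered type: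
`a` lies in `V`, `a` is an upper bound of `S`, and `a` is below every upper bound of `S`
that lies in `V`. -/
def IsLUBWithin {α : Type*} [Preorder α] (V S : Set α) (a : α) : Prop :=
  a ∈ V ∧ a ∈ upperBounds S ∧ ∀ b ∈ V, b ∈ upperBounds S → a ≤ b

/-- A functional semimodule on `X`: a subset of `K(X)` invariant under multiplication by
scalars from `K` which is an upper semilattice in the induced (pointwise) order; its
addition is `f ⊕ g = sup {f, g}`, the supremum being taken inside `V`. -/
structure IsFunctionalSemimodule (V : Set (X → K)) : Prop where
  smul_mem : ∀ (c : K), ∀ f ∈ V, c • f ∈ V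
  pair_lub : ∀ f ∈ V, ∀ g ∈ V, ∃ h, IsLUBWithin V {f, g} h

/-- A b-complete functional semimodule on `X`: every nonempty subset bounded above (by an
element of `V`) has a supremum in `V`; scalar multiplication by a fixed `c ∈ K` preserves
such suprema; and for fixed `f ∈ V` the map `c ↦ c • f` sends suprema of nonempty
bounded-above subsets of `K` to suprema of their images. -/
structure IsBCompleteFunctionalSemimodule (V : Set (X → K)) extends
    IsFunctionalSemimodule V : Prop where
  exists_lub : ∀ S ⊆ V, S.Nonempty → (∃ b ∈ V, b ∈ upperBounds S) → ∃ a, IsLUBWithin V S a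
  smul_lub : ∀ (c : K) (S : Set (X → K)) (a : X → K), S ⊆ V → S.Nonempty →
    IsLUBWithin V S a → IsLUBWithin V ((fun f => c • f) '' S) (c • a)
  act_lub : ∀ f ∈ V, ∀ (s : Set K) (a : K), s.Nonempty → BddAbove s → IsLUB s a →
    IsLUBWithin V ((fun c => c • f) '' s) (a • f)

/-- `V` is a b-subsemimodule of `K(X)`: the embedding `V → K(X)` preserves sums
(the sum in `V` of `f, g ∈ V`, i.e. the supremum of `{f, g}` taken inside `V`, is the
pointwise sum `f + g`) and preserves suprema of nonempty bounded-above subsets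
(suprema taken inside `V` are suprema in `K(X)`). -/
structure IsBSubsemimodule (V : Set (X → K)) : Prop where
  add_eq : ∀ f ∈ V, ∀ g ∈ V, ∀ h, IsLUBWithin V {f, g} h → h = f + g
  lub_preserved : ∀ S ⊆ V, S.Nonempty → ∀ a, IsLUBWithin V S a → IsLUB S a

/-- A functional ∧-semimodule: a functional semimodule containing the zero function and
closed under pointwise infima (computed in `K(X)`) of arbitrary nonempty subsets. -/
structure IsFunctionalWedgeSemimodule (V : Set (X → K)) extends
    IsFunctionalSemimodule V : Prop where
  zero_mem : (0 : X → K) ∈ V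
  inf_mem : ∀ S ⊆ V, S.Nonempty → ∀ g : X → K,
    (∀ x : X, IsGLB ((fun f => f x) '' S) (g x)) → g ∈ V

/-- `V ⊆ K(X)` is non-degenerate: at every point some member of `V` takes the value `1`. -/
def IsNonDegenerate (V : Set (X → K)) : Prop :=
  ∀ x : X, ∃ g ∈ V, g x = 1

/-- `V ⊆ K(X)` is admissible: for every `f ∈ V` and `x ∈ X` there is `g ∈ V` with
`g x = 1` and `f x • g ≤ f`. -/
def IsAdmissible (V : Set (X → K)) : Prop :=
  ∀ f ∈ V, ∀ x : X, ∃ g ∈ V, g x = 1 ∧ f x • g ≤ f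

/-- An (abstract) b-complete idempotent semimodule over `K`: the partial order is the
canonical one (`x ≤ y ↔ x + y = y`, which forces addition to be idempotent), every
nonempty bounded-above subset has a least upper bound, scalar multiplication by a fixed
`c ∈ K` preserves such suprema, and for fixed `w` the map `c ↦ c • w` sends suprema of
nonempty bounded-above subsets of `K` to suprema of their images. -/
structure IsBCompleteSemimodule (K W : Type*) [IdemSemiring K] [AddCommMonoid W]
    [PartialOrder W] [Module K W] : Prop where
  le_iff_add : ∀ x y : W, x ≤ y ↔ x + y = y
  exists_lub : ∀ s : Set W, s.Nonempty → BddAbove s → ∃ a, IsLUB s a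
  smul_lub : ∀ (c : K) (s : Set W) (a : W), s.Nonempty → IsLUB s a →
    IsLUB ((fun x => c • x) '' s) (c • a)
  act_lub : ∀ (w : W) (s : Set K) (a : K), s.Nonempty → BddAbove s → IsLUB s a →
    IsLUB ((fun c => c • w) '' s) (a • w)

/-- A b-linear map between (abstract) semimodules over `K`: it commutes with scalar
multiplication and sends suprema of nonempty bounded-above subsets to suprema of their
images. -/
structure IsBLinearMap (K : Type*) {V W : Type*} [IdemSemiring K]
    [AddCommMonoid V] [PartialOrder V] [Module K V]
    [AddCommMonoid W] [PartialOrder W] [Module K W] (A : V → W) : Prop where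
  map_smul : ∀ (c : K) (v : V), A (c • v) = c • A v
  map_lub : ∀ s : Set V, s.Nonempty → BddAbove s → ∀ a, IsLUB s a → IsLUB (A '' s) (A a)

/-- A one-dimensional (rank 1) map `V → W`: `v ↦ φ v • w` for a b-linear functional `φ`
and a fixed `w ∈ W`. -/
def IsOneDimMap (K : Type*) {V W : Type*} [IdemSemiring K]
    [AddCommMonoid V] [PartialOrder V] [Module K V]
    [AddCommMonoid W] [PartialOrder W] [Module K W] (g : V → W) : Prop :=
  ∃ (φ : V → K) (w : W), IsBLinearMap K φ ∧ ∀ v : V, g v = φ v • w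

/-- A b-nuclear map `V → W`: the pointwise supremum of a set `G` of one-dimensional maps
such that `{g v : g ∈ G}` is bounded above for every `v`. -/
def IsBNuclearMap (K : Type*) {V W : Type*} [IdemSemiring K]
    [AddCommMonoid V] [PartialOrder V] [Module K V]
    [AddCommMonoid W] [PartialOrder W] [Module K W] (A : V → W) : Prop :=
  ∃ G : Set (V → W), (∀ g ∈ G, IsOneDimMap K g) ∧
    ∀ v : V, BddAbove ((fun g => g v) '' G) ∧ IsLUB ((fun g => g v) '' G) (A v)

/-- A δ-functional on an (abstract) semimodule `V`: a b-linear functional `φ : V → K`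
such that `φ w • v ≤ w` for some fixed `v ∈ V` and all `w ∈ V`. -/
def IsDeltaFunctional (K : Type*) {V : Type*} [IdemSemiring K]
    [AddCommMonoid V] [PartialOrder V] [Module K V] (φ : V → K) : Prop :=
  IsBLinearMap K φ ∧ ∃ v : V, ∀ w : V, φ w • v ≤ w

/-- The set `Δ(V)` of δ-functionals on `V`, as a type. -/
def DeltaSet (K V : Type*) [IdemSemiring K]
    [AddCommMonoid V] [PartialOrder V] [Module K V] : Type _ :=
  {φ : V → K // IsDeltaFunctional K φ}

/-- The natural map `i_Δ : V → K(Δ(V))`, `(i_Δ v) φ = φ v`. -/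
def iDelta (K V : Type*) [IdemSemiring K]
    [AddCommMonoid V] [PartialOrder V] [Module K V] : V → (DeltaSet K V → K) :=
  fun v φ => φ.1 v

/-- A b-linear operator on a functional semimodule `V ⊆ K(X)` with values in an abstract
semimodule `W`: it commutes with scalar multiplication and sends suprema (taken inside
`V`) of nonempty bounded-above subsets of `V` to suprema of their images in `W`. -/
structure IsBLinearOn {K X : Type*} [IdemSemiring K] {W : Type*} [AddCommMonoid W]
    [PartialOrder W] [Module K W] (V : Set (X → K)) (A : (X → K) → W) : Prop where
  map_smul : ∀ (c : K), ∀ f ∈ V, A (c • f) = c • A f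
  map_lub : ∀ S ⊆ V, S.Nonempty → ∀ a, IsLUBWithin V S a → IsLUB (A '' S) (A a)

/-- `k : X → W` is a kernel of the operator `A` on `V ⊆ K(X)`: for every `f ∈ V` the set
`{f x • k x : x ∈ X}` is bounded above in `W` and `A f = ⊕_{x ∈ X} f x • k x`. -/
def IsKernelOf {K X : Type*} [IdemSemiring K] {W : Type*} [AddCommMonoid W]
    [PartialOrder W] [Module K W] (V : Set (X → K)) (A : (X → K) → W) (k : X → W) : Prop :=
  ∀ f ∈ V, BddAbove (Set.range fun x => f x • k x) ∧
    IsLUB (Set.range fun x => f x • k x) (A f)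

/-- `A` is an integral operator (has an integral representation): it has a kernel. -/
def IsIntegralOn {K X : Type*} [IdemSemiring K] {W : Type*} [AddCommMonoid W]
    [PartialOrder W] [Module K W] (V : Set (X → K)) (A : (X → K) → W) : Prop :=
  ∃ k : X → W, IsKernelOf V A k

/-- One-dimensional map from a functional semimodule `V ⊆ K(X)` to `W`. -/
def IsOneDimOn {K X : Type*} [IdemSemiring K] {W : Type*} [AddCommMonoid W]
    [PartialOrder W] [Module K W] (V : Set (X → K)) (g : (X → K) → W) : Prop :=
  ∃ (φ : (X → K) → K) (w : W), IsBLinearOn V φ ∧ ∀ f ∈ V, g f = φ f • w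

/-- b-nuclear map from a functional semimodule `V ⊆ K(X)` to `W`: the (pointwise on `V`)
supremum of a set of one-dimensional maps, bounded above at every `f ∈ V`. -/
def IsBNuclearOn {K X : Type*} [IdemSemiring K] {W : Type*} [AddCommMonoid W]
    [PartialOrder W] [Module K W] (V : Set (X → K)) (A : (X → K) → W) : Prop :=
  ∃ G : Set ((X → K) → W), (∀ g ∈ G, IsOneDimOn V g) ∧
    ∀ f ∈ V, BddAbove ((fun g => g f) '' G) ∧ IsLUB ((fun g => g f) '' G) (A f)

/-- One-dimensional operator from the functional semimodule `V ⊆ K(X)` to itself. -/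
def IsOneDimSelf {K X : Type*} [IdemSemiring K] (V : Set (X → K))
    (g : (X → K) → (X → K)) : Prop :=
  ∃ (φ : (X → K) → K) (w : X → K), IsBLinearOn V φ ∧ w ∈ V ∧ ∀ f ∈ V, g f = φ f • w

/-- b-nuclear operator from the functional semimodule `V ⊆ K(X)` to itself (the suprema
being taken inside `V`). -/
def IsBNuclearSelf {K X : Type*} [IdemSemiring K] (V : Set (X → K))
    (A : (X → K) → (X → K)) : Prop :=
  ∃ G : Set ((X → K) → (X → K)), (∀ g ∈ G, IsOneDimSelf V g) ∧
    ∀ f ∈ V, IsLUBWithin V ((fun g => g f) '' G) (A f)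

/-- Integral operator from the functional semimodule `V ⊆ K(X)` to itself: it has a
kernel `k : X → V`, the suprema being taken inside `V`. -/
def IsIntegralSelf {K X : Type*} [IdemSemiring K] (V : Set (X → K))
    (A : (X → K) → (X → K)) : Prop :=
  ∃ k : X → (X → K), (∀ x : X, k x ∈ V) ∧
    ∀ f ∈ V, IsLUBWithin V (Set.range fun x => f x • k x) (A f)

/-- The kernel theorem holds in `V ⊆ K(X)`: every b-linear map from `V` to an arbitrary
b-complete semimodule over `K` has an integral representation. -/
def KernelTheoremHolds {K X : Type*} [IdemSemiring K] (V : Set (X → K)) : Prop :=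
  ∀ (W : Type w) [AddCommMonoid W] [PartialOrder W] [Module K W],
    IsBCompleteSemimodule K W → ∀ A : (X → K) → W, IsBLinearOn V A → IsIntegralOn V A

/-- A b-linear operator between functional semimodules `V ⊆ K(X)` and `W ⊆ K(Y)`. -/
structure IsBLinearBetween (V : Set (X → K)) (W : Set (Y → K))
    (A : (X → K) → (Y → K)) : Prop where
  maps_to : ∀ f ∈ V, A f ∈ W
  map_smul : ∀ (c : K), ∀ f ∈ V, A (c • f) = c • A f
  map_lub : ∀ S ⊆ V, S.Nonempty → ∀ a, IsLUBWithin V S a → IsLUBWithin W (A '' S) (A a)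

/-- δ-functionals on a functional semimodule `V ⊆ K(X)`. -/
def IsDeltaOn {K X : Type*} [IdemSemiring K] (V : Set (X → K)) (φ : (X → K) → K) : Prop :=
  IsBLinearOn V φ ∧ ∃ v ∈ V, ∀ w ∈ V, φ w • v ≤ w

/-- The set `Δ(V)` of δ-functionals on the functional semimodule `V ⊆ K(X)`, as a type. -/
def DeltaOn {K X : Type*} [IdemSemiring K] (V : Set (X → K)) : Type _ :=
  {φ : (X → K) → K // IsDeltaOn V φ}

/-- The natural map `i_Δ : V → K(Δ(V))` for a functional semimodule `V ⊆ K(X)`. -/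
def iDeltaOn {K X : Type*} [IdemSemiring K] (V : Set (X → K)) :
    (X → K) → (DeltaOn V → K) :=
  fun f φ => φ.1 f

end Defs

/-- **Proposition 1.** Let `K` be a b-complete idempotent semiring, `X` a set and
`W ⊆ K(X)` a b-complete functional semimodule on `X`. Then `W` is a b-subsemimodule of
`K(X)` iff every evaluation functional `δ_x : f ↦ f x` (`x ∈ X`) is b-linear on `W`. -/
theorem bSubsemimodule_iff_delta_bLinear {K : Type*} [IdemSemiring K] {X : Type*}
    (hK : IsBCompleteSemiring K)
    (W : Set (X → K)) (hW : IsBCompleteFunctionalSemimodule W) :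
    IsBSubsemimodule W ↔ ∀ x : X, IsBLinearOn W (fun f : X → K => f x) := by
  constructor
  · intro hsub x
    refine ⟨fun c f _ => rfl, ?_⟩
    intro S hS hne a ha
    have hLUB : IsLUB S a := hsub.lub_preserved S hS hne a ha
    constructor
    · rintro k ⟨f, hf, rfl⟩
      exact hLUB.1 hf x
    · intro b hb
      have hbdd : ∀ y : X, ∃ c, IsLUB ((fun f : X → K => f y) '' S) c := by
        intro y
        refine hK.exists_lub _ (hne.image _) ⟨a y, ?_⟩
        rintro k ⟨f, hf, rfl⟩
        exact hLUB.1 hf y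
      choose g hg using hbdd
      have hga : a ≤ g := by
        apply hLUB.2
        intro f hf y
        exact (hg y).1 ⟨f, hf, rfl⟩
      have hag : g ≤ a := fun y => (hg y).2 (by rintro k ⟨f, hf, rfl⟩; exact hLUB.1 hf y)
      have hax : a x = g x := le_antisymm (hga x) (hag x)
      rw [hax]
      exact (hg x).2 hb
  · intro hδ
    constructor
    · intro f hf g hg h hh
      funext x
      have hlub := (hδ x).map_lub {f, g}
        (by rintro u (rfl | rfl) <;> assumption) ⟨f, by simp⟩ h hh
      have himg : (fun f : X → K => f x) '' {f, g} = {f x, g x} := by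
        simp [Set.image_insert_eq]
      rw [himg] at hlub
      have : h x = f x ⊔ g x := hlub.unique isLUB_pair
      rw [this, ← add_eq_sup]
      rfl
    · intro S hS hne a ha
      refine ⟨ha.2.1, ?_⟩
      intro b hb
      intro x
      have hlub := (hδ x).map_lub S hS hne a ha
      refine hlub.2 ?_
      rintro k ⟨f, hf, rfl⟩
      exact hb hf x
end

section
/- Let K be a b-complete idempotent semiring, X a set, W an admissible b-complete semimodule over K, and V ⊂ K(X) a functional ∧-semimodule. Then every b-linear operator A : V → W has an integral representation, i.e., there exists a kernel k : X → W such that {f(x) ⊙ k(x) : x ∈ X} is bounded above in W for every f ∈ V and Af = sup_{x ∈ X} f(x) ⊙ k(x) for all f ∈ V. -/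
/-
Common definitions: b-complete idempotent semirings, b-complete idempotent
semimodules, functional semimodules, b-linear / integral / one-dimensional /
b-nuclear maps, δ-functionals, kernel theorems.
-/

open Set

universe u v w

/-!
For each point `x`, the pointwise infimum `e x` of `{g ∈ V | g x = 1}` lies in `V` (as `V` is a
∧-semimodule), takes the value `1` at `x`, and by admissibility satisfies `f x • e x ≤ f` for all
`f ∈ V`. Hence every `f ∈ V` is the supremum in `V` of `{f x • e x}`, and b-linearity of `A` turns
this into `A f = ⊕ₓ f x • A (e x)`: the kernel is `x ↦ A (e x)`.
-/

section KernelConstruction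

variable {K : Type*} [IdemSemiring K] {X : Type*}

theorem IsBCompleteSemiring.exists_isGLB (hK : IsBCompleteSemiring K) {s : Set K}
    (hs : s.Nonempty) : ∃ a, IsGLB s a := by
  obtain ⟨t, ht⟩ := hs
  obtain ⟨a, ha⟩ := hK.exists_lub (lowerBounds s) ⟨0, fun _ _ => zero_le⟩
    ⟨t, fun _ hl => hl ht⟩
  exact ⟨a, fun _ hu => ha.2 fun _ hl => hl hu, fun _ hl => ha.1 hl⟩

theorem IsAdmissible.isNonDegenerate {V : Set (X → K)} (hadm : IsAdmissible V)
    (h0 : (0 : X → K) ∈ V) : IsNonDegenerate V := by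
  intro x
  obtain ⟨g, hg, hgx, -⟩ := hadm 0 h0 x
  exact ⟨g, hg, hgx⟩

theorem IsFunctionalWedgeSemimodule.exists_isLeast_eval_eq_one (hK : IsBCompleteSemiring K)
    {V : Set (X → K)} (hV : IsFunctionalWedgeSemimodule V) (hnd : IsNonDegenerate V) (x : X) :
    ∃ e, IsLeast {g ∈ V | g x = 1} e := by
  have hne : {g ∈ V | g x = 1}.Nonempty := hnd x
  choose e he using fun y => hK.exists_isGLB (hne.image fun g : X → K => g y)
  have hle : ∀ g ∈ {g ∈ V | g x = 1}, e ≤ g := fun g hg y => (he y).1 ⟨g, hg, rfl⟩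
  have hex : e x = 1 := by
    have himg : (fun g : X → K => g x) '' {g ∈ V | g x = 1} = {1} :=
      eq_singleton_iff_nonempty_unique_mem.2
        ⟨hne.image _, by rintro _ ⟨g, hg, rfl⟩; exact hg.2⟩
    exact (himg ▸ he x).unique isGLB_singleton
  exact ⟨e, ⟨hV.inf_mem _ (fun g hg => hg.1) hne e he, hex⟩, hle⟩

theorem IsAdmissible.smul_le_of_isLeast {V : Set (X → K)} (hadm : IsAdmissible V)
    {f e : X → K} (hf : f ∈ V) {x : X} (he : IsLeast {g ∈ V | g x = 1} e) : f x • e ≤ f := by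
  obtain ⟨g, hg, hgx, hfg⟩ := hadm f hf x
  exact le_trans (fun y => mul_le_mul_right (he.2 ⟨hg, hgx⟩ y) (f x)) hfg

theorem isLUBWithin_range_smul {V : Set (X → K)} {f : X → K} (hf : f ∈ V) {e : X → X → K}
    (he : ∀ x, e x x = 1) (hle : ∀ x, f x • e x ≤ f) :
    IsLUBWithin V (range fun x => f x • e x) f := by
  refine ⟨hf, ?_, fun h _ hub x => ?_⟩
  · rintro _ ⟨x, rfl⟩
    exact hle x
  · simpa [he x] using hub ⟨x, rfl⟩ x

/-- Unlike `IsBLinearOn.map_lub`, this also covers `S = ∅`: the least element of `V` is `0` and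
is sent to `0 = ⊥`. -/
theorem IsBLinearOn.isLUB_image {W : Type*} [AddCommMonoid W] [PartialOrder W] [Module K W]
    (hW : IsBCompleteSemimodule K W) {V : Set (X → K)} (hsmul : ∀ c : K, ∀ f ∈ V, c • f ∈ V)
    {A : (X → K) → W} (hA : IsBLinearOn V A) {S : Set (X → K)} (hS : S ⊆ V) {a : X → K}
    (ha : IsLUBWithin V S a) : IsLUB (A '' S) (A a) := by
  rcases S.eq_empty_or_nonempty with rfl | hne
  · have ha0 : (0 : K) • a = a :=
      le_antisymm (fun y => (zero_smul K (a y)).trans_le zero_le)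
        (ha.2.2 _ (hsmul 0 a ha.1) (by simp))
    have hAa : A a = 0 := by rw [← ha0, hA.map_smul 0 a ha.1, zero_smul]
    rw [image_empty, hAa, isLUB_empty_iff]
    exact fun w => (hW.le_iff_add 0 w).2 (zero_add w)
  · exact hA.map_lub S hS hne a ha

end KernelConstruction

/-- **Theorem 1.** Let `K` be a b-complete idempotent semiring, `X` a set, `W` an
admissible b-complete semimodule over `K` and `V ⊆ K(X)` a functional ∧-semimodule
(admissibility being the property of the functional semimodule `V`: for every `f ∈ V`
and `x ∈ X` there is `g ∈ V` with `g x = 1` and `f x • g ≤ f`). Then every b-linear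
operator `A : V → W` has an integral representation: there is a kernel `k : X → W` such
that `{f x • k x : x ∈ X}` is bounded above in `W` for every `f ∈ V` and
`A f = ⊕_{x ∈ X} f x • k x` for all `f ∈ V`. -/
theorem bLinear_integral_representation {K : Type*} [IdemSemiring K] {X : Type*}
    (hK : IsBCompleteSemiring K)
    {W : Type*} [AddCommMonoid W] [PartialOrder W] [Module K W]
    (hW : IsBCompleteSemimodule K W)
    (V : Set (X → K)) (hV : IsFunctionalWedgeSemimodule V) (hadm : IsAdmissible V)
    (A : (X → K) → W) (hA : IsBLinearOn V A) :
    ∃ k : X → W, ∀ f ∈ V, BddAbove (Set.range fun x => f x • k x) ∧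
      IsLUB (Set.range fun x => f x • k x) (A f) := by
  choose e he using hV.exists_isLeast_eval_eq_one hK (hadm.isNonDegenerate hV.zero_mem)
  refine ⟨fun x => A (e x), fun f hf => ?_⟩
  have hsup : IsLUBWithin V (range fun x => f x • e x) f :=
    isLUBWithin_range_smul hf (fun x => (he x).1.2) fun x => hadm.smul_le_of_isLeast hf (he x)
  have hlub := hA.isLUB_image hW hV.smul_mem
    (range_subset_iff.2 fun x => hV.smul_mem _ _ (he x).1.1) hsup
  rw [← range_comp] at hlub
  have hcomp : A ∘ (fun x => f x • e x) = fun x => f x • A (e x) :=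
    funext fun x => hA.map_smul (f x) (e x) (he x).1.1
  rw [hcomp] at hlub
  exact ⟨⟨A f, hlub.1⟩, hlub⟩
end

section
/- Let K be a b-complete idempotent semiring, X a set, V ⊂ K(X) a non-degenerate b-complete functional semimodule, W a b-complete semimodule over K, and A : V → W an integral operator. Then the set of all kernels of A is closed under the supremum operation applied to its arbitrary nonempty subsets (the pointwise supremum of any nonempty set of kernels of A is again a kernel of A); in particular, A has a unique maximal kernel with respect to the natural (pointwise) order on kernels. -/
/-
Common definitions: b-complete idempotent semirings, b-complete idempotent
semimodules, functional semimodules, b-linear / integral / one-dimensional /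
b-nuclear maps, δ-functionals, kernel theorems.
-/

open Set

universe u v w

/-- Let `K` be a b-complete idempotent semiring, `V ⊆ K(X)` a non-degenerate b-complete
functional semimodule, `W` a b-complete semimodule over `K` and `A : V → W` an integral
operator. Then the set of kernels of `A` is closed under pointwise suprema of arbitrary
nonempty subsets, and `A` has a unique maximal kernel in the pointwise order. -/
theorem kernels_closed_under_sup_and_max_kernel {K : Type*} [IdemSemiring K]
    {X : Type*} (hK : IsBCompleteSemiring K)
    {W : Type*} [AddCommMonoid W] [PartialOrder W] [Module K W]
    (hW : IsBCompleteSemimodule K W)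
    (V : Set (X → K)) (hV : IsBCompleteFunctionalSemimodule V)
    (hnd : IsNonDegenerate V)
    (A : (X → K) → W) (hA : IsIntegralOn V A) :
    (∀ 𝒦 : Set (X → W), 𝒦.Nonempty → (∀ k ∈ 𝒦, IsKernelOf V A k) →
      ∀ m : X → W, (∀ x : X, IsLUB ((fun k => k x) '' 𝒦) (m x)) →
        IsKernelOf V A m) ∧
    (∃! m : X → W, IsKernelOf V A m ∧ ∀ k : X → W, IsKernelOf V A k → k ≤ m) := by
   classical
  -- scalar multiplication is monotone in the second argument
  have smul_mono : ∀ (c : K) {u v : W}, u ≤ v → c • u ≤ c • v := by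
    intro c u v huv
    have hlub : IsLUB ({u, v} : Set W) v := by
      constructor
      · intro z hz
        rcases hz with rfl | rfl
        · exact huv
        · exact le_rfl
      · intro z hz
        exact hz (by simp)
    have := hW.smul_lub c {u, v} v ⟨u, by simp⟩ hlub
    exact this.1 ⟨u, by simp, rfl⟩
  -- Part 1
  have part1 : ∀ 𝒦 : Set (X → W), 𝒦.Nonempty → (∀ k ∈ 𝒦, IsKernelOf V A k) →
      ∀ m : X → W, (∀ x : X, IsLUB ((fun k => k x) '' 𝒦) (m x)) →
        IsKernelOf V A m := by
    intro 𝒦 hne hker m hm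
    intro f hf
    -- every f x • m x ≤ A f
    have hub : ∀ x : X, f x • m x ≤ A f := by
      intro x
      have hlub := hW.smul_lub (f x) ((fun k => k x) '' 𝒦) (m x)
        (hne.image _) (hm x)
      refine hlub.2 ?_
      rintro z ⟨_, ⟨k, hk, rfl⟩, rfl⟩
      exact (hker k hk f hf).2.1 ⟨x, rfl⟩
    have hbdd : BddAbove (Set.range fun x => f x • m x) := by
      refine ⟨A f, ?_⟩
      rintro z ⟨x, rfl⟩
      exact hub x
    refine ⟨hbdd, ?_, ?_⟩
    · rintro z ⟨x, rfl⟩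
      exact hub x
    · intro b hb
      obtain ⟨k₀, hk₀⟩ := hne
      refine (hker k₀ hk₀ f hf).2.2 ?_
      rintro z ⟨x, rfl⟩
      have h1 : k₀ x ≤ m x := (hm x).1 ⟨k₀, hk₀, rfl⟩
      exact le_trans (smul_mono (f x) h1) (hb ⟨x, rfl⟩)
  refine ⟨part1, ?_⟩
  -- Part 2
  set 𝒦 : Set (X → W) := {k | IsKernelOf V A k} with h𝒦
  have hne : 𝒦.Nonempty := hA
  have hsup : ∀ x : X, ∃ a, IsLUB ((fun k => k x) '' 𝒦) a := by
    intro x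
    obtain ⟨g, hg, hg1⟩ := hnd x
    refine hW.exists_lub _ (hne.image _) ⟨A g, ?_⟩
    rintro z ⟨k, hk, rfl⟩
    have := (hk g hg).2.1 ⟨x, rfl⟩
    simpa [hg1] using this
  choose m hm using hsup
  have hmker : IsKernelOf V A m := part1 𝒦 hne (fun k hk => hk) m hm
  have hmax : ∀ k : X → W, IsKernelOf V A k → k ≤ m := by
    intro k hk x
    exact (hm x).1 ⟨k, hk, rfl⟩
  refine ⟨m, ⟨hmker, hmax⟩, ?_⟩
  rintro y ⟨hy, hymax⟩
  exact le_antisymm (hmax y hy) (hymax m hmker)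
end

section
/- Let K be a b-complete idempotent semiring, X and Y nonempty sets, V a b-subsemimodule of K(X) and W a b-subsemimodule of K(Y). Let k : X × Y → K be such that for each x ∈ X the function k_x : y ↦ k(x, y) lies in W and for each f ∈ V the set {f(x) ⊙ k_x : x ∈ X} is bounded above in W. Then the formula (Af)(y) = sup_{x ∈ X} f(x) ⊙ k(x, y) defines a b-linear operator A : V → W with kernel k, i.e., every element of kern_{V,W}(X,Y) is the kernel of a b-linear integral operator from V to W. -/
/-
Common definitions: b-complete idempotent semirings, b-complete idempotent
semimodules, functional semimodules, b-linear / integral / one-dimensional /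
b-nuclear maps, δ-functionals, kernel theorems.
-/

open Set

universe u v w

private lemma isLUBWithin_unique {α : Type*} [PartialOrder α] {V S : Set α} {a b : α}
    (ha : IsLUBWithin V S a) (hb : IsLUBWithin V S b) : a = b :=
  le_antisymm (ha.2.2 b hb.1 hb.2.1) (hb.2.2 a ha.1 ha.2.1)



/-- Let `K` be a b-complete idempotent semiring, `X`, `Y` nonempty sets, `V` a
b-subsemimodule of `K(X)` and `W` a b-subsemimodule of `K(Y)`. If `k : X × Y → K` is
such that `k_x : y ↦ k (x, y)` lies in `W` for each `x ∈ X` and `{f x • k_x : x ∈ X}`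
is bounded above in `W` for each `f ∈ V`, then `(A f) y = ⊕_{x ∈ X} f x ⊙ k (x, y)`
defines a b-linear operator `A : V → W` with kernel `k`. -/
theorem kernel_defines_bLinear_integral_operator {K : Type*} [IdemSemiring K]
    {X Y : Type*} [Nonempty X] [Nonempty Y] (hK : IsBCompleteSemiring K)
    (V : Set (X → K)) (hV : IsBCompleteFunctionalSemimodule V)
    (hVsub : IsBSubsemimodule V)
    (W : Set (Y → K)) (hW : IsBCompleteFunctionalSemimodule W)
    (hWsub : IsBSubsemimodule W)
    (k : X × Y → K)
    (hkx : ∀ x : X, (fun y => k (x, y)) ∈ W)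
    (hbd : ∀ f ∈ V, ∃ b ∈ W, b ∈ upperBounds (Set.range fun x => f x • fun y => k (x, y))) :
    ∃ A : (X → K) → (Y → K),
      (∀ f ∈ V, ∀ y : Y, IsLUB (Set.range fun x => f x * k (x, y)) (A f y)) ∧
      (∀ f ∈ V, IsLUBWithin W (Set.range fun x => f x • fun y => k (x, y)) (A f)) ∧
      IsBLinearBetween V W A := by
  classical
  have hsubW : ∀ f : X → K, (Set.range fun x => f x • fun y => k (x, y)) ⊆ W := by
    intro f
    rintro _ ⟨x, rfl⟩
    exact hW.smul_mem _ _ (hkx x)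
  have hex : ∀ f : X → K, ∃ a : Y → K,
      f ∈ V → IsLUBWithin W (Set.range fun x => f x • fun y => k (x, y)) a := by
    intro f
    by_cases hf : f ∈ V
    · obtain ⟨b, hbW, hub⟩ := hbd f hf
      obtain ⟨a, ha⟩ := hW.exists_lub (Set.range fun x => f x • fun y => k (x, y))
        (hsubW f) (Set.range_nonempty _) ⟨b, hbW, hub⟩
      exact ⟨a, fun _ => ha⟩
    · exact ⟨0, fun h => absurd h hf⟩
  choose A hA using hex
  -- Pointwise description of A f
  have hpt : ∀ f ∈ V, ∀ y : Y, IsLUB (Set.range fun x => f x * k (x, y)) (A f y) := by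
    intro f hf y
    have hlub : IsLUB (Set.range fun x => f x • fun y => k (x, y)) (A f) :=
      hWsub.lub_preserved _ (hsubW f) (Set.range_nonempty _) _ (hA f hf)
    have hub : ∀ y' : Y, ∀ x : X, f x * k (x, y') ≤ A f y' := by
      intro y' x
      have h1 : (f x • fun y => k (x, y)) ≤ A f := hlub.1 ⟨x, rfl⟩
      simpa [smul_eq_mul] using h1 y'
    have hexc : ∀ y' : Y, ∃ c : K, IsLUB (Set.range fun x => f x * k (x, y')) c := by
      intro y'
      exact hK.exists_lub _ (Set.range_nonempty _)
        ⟨A f y', by rintro _ ⟨x, rfl⟩; exact hub y' x⟩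
    choose c hc using hexc
    have h1 : A f ≤ c := by
      apply hlub.2
      rintro _ ⟨x, rfl⟩
      refine Pi.le_def.mpr fun y' => ?_
      simpa [smul_eq_mul] using (hc y').1 ⟨x, rfl⟩
    have h2 : c y ≤ A f y := by
      apply (hc y).2
      rintro _ ⟨x, rfl⟩
      exact hub y x
    have : A f y = c y := le_antisymm (h1 y) h2
    rw [this]
    exact hc y
  refine ⟨A, hpt, fun f hf => hA f hf, ?_, ?_, ?_⟩
  · -- maps_to
    exact fun f hf => (hA f hf).1
  · -- map_smul
    intro c f hf
    have hset : (Set.range fun x => (c • f) x • fun y => k (x, y))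
        = (fun g => c • g) '' (Set.range fun x => f x • fun y => k (x, y)) := by
      ext g
      constructor
      · rintro ⟨x, rfl⟩
        refine ⟨f x • fun y => k (x, y), ⟨x, rfl⟩, ?_⟩
        funext y
        simp [smul_eq_mul, mul_assoc]
      · rintro ⟨_, ⟨x, rfl⟩, rfl⟩
        refine ⟨x, ?_⟩
        funext y
        simp [smul_eq_mul, mul_assoc]
    have h1 : IsLUBWithin W (Set.range fun x => (c • f) x • fun y => k (x, y)) (A (c • f)) :=
      hA _ (hV.smul_mem c f hf)
    have h2 : IsLUBWithin W (Set.range fun x => (c • f) x • fun y => k (x, y)) (c • A f) := by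
      rw [hset]
      exact hW.smul_lub c _ (A f) (hsubW f) (Set.range_nonempty _) (hA f hf)
    exact isLUBWithin_unique h1 h2
  · -- map_lub
    intro S hSV hne a haV
    have haVmem : a ∈ V := haV.1
    have hlubA : IsLUB S a := hVsub.lub_preserved S hSV hne a haV
    refine ⟨(hA a haVmem).1, ?_, ?_⟩
    · -- A a is an upper bound of A '' S
      rintro _ ⟨f, hfS, rfl⟩
      refine (hA f (hSV hfS)).2.2 (A a) (hA a haVmem).1 ?_
      rintro _ ⟨x, rfl⟩
      have hfa : f ≤ a := haV.2.1 hfS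
      have step : (f x • fun y => k (x, y)) ≤ (a x • fun y => k (x, y)) := by
        refine Pi.le_def.mpr fun y => ?_
        simpa [smul_eq_mul] using mul_le_mul_left (hfa x) (k (x, y))
      exact le_trans step ((hA a haVmem).2.1 ⟨x, rfl⟩)
    · -- minimality
      intro b hbW hbub
      have hexd : ∀ x : X, ∃ d : K, IsLUB ((fun f : X → K => f x) '' S) d := by
        intro x
        refine hK.exists_lub _ (hne.image _) ⟨a x, ?_⟩
        rintro _ ⟨f, hfS, rfl⟩
        exact hlubA.1 hfS x
      choose d hd using hexd
      have had : a ≤ d := by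
        apply hlubA.2
        intro f hfS
        exact Pi.le_def.mpr fun x => (hd x).1 ⟨f, hfS, rfl⟩
      have key : ∀ (x : X) (y : Y), a x * k (x, y) ≤ b y := by
        intro x y
        have hmul := hK.mul_right_lub (k (x, y)) _ (d x) (hne.image _) (hd x)
        have h2 : d x * k (x, y) ≤ b y := by
          apply hmul.2
          rintro _ ⟨_, ⟨f, hfS, rfl⟩, rfl⟩
          calc f x * k (x, y) ≤ A f y := (hpt f (hSV hfS) y).1 ⟨x, rfl⟩
            _ ≤ b y := hbub ⟨f, hfS, rfl⟩ y
        exact le_trans (mul_le_mul_left (had x) (k (x, y))) h2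
      refine (hA a haVmem).2.2 b hbW ?_
      rintro _ ⟨x, rfl⟩
      refine Pi.le_def.mpr fun y => ?_
      simpa [smul_eq_mul] using key x y
end
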